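/- Let g be a finite-dimensional real inner product space and (V_x)_{x∈X} a family of k-dimensional subspaces of g indexed by a set X. Suppose η₀ ∈ g is not in the closure of ⋃_{x∈X} V_x^⊥. Then there exists an open neighborhood Ω of η₀ such that C_Ω := inf_{x∈X} sup_{Y ∈ V_x, |Y|=1} inf_{ξ∈Ω} |⟨ξ, Y⟩| > 0. -/

import Mathlib

/-!
If the ball of radius `ε` about `η₀` misses every `(V x)ᗮ`, the orthogonal projection `P` of
`η₀` onto `V x` has norm at least `ε`, because `η₀ - P ∈ (V x)ᗮ`. Its normalization `Y`
satisfies `⟪η₀, Y⟫ = ‖P‖ ≥ ε`, and `ξ ↦ ⟪ξ, Y⟫` is `1`-Lipschitz, so `|⟪ξ, Y⟫| ≥ ε / 2` on the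
ball of radius `ε / 2` about `η₀`, uniformly in `x`.
-/

open scoped RealInnerProductSpace
open Metric

section

variable {F : Type*} [NormedAddCommGroup F] [InnerProductSpace ℝ F]

theorem real_inner_sub_norm_sub_le_of_norm_eq_one {Y : F} (hY : ‖Y‖ = 1) (ξ η : F) :
    ⟪η, Y⟫ - ‖ξ - η‖ ≤ ⟪ξ, Y⟫ := by
  have h := real_inner_le_norm (η - ξ) Y
  rw [hY, mul_one, inner_sub_left, norm_sub_rev] at h
  linarith

namespace Submodule

variable (K : Submodule ℝ F) [K.HasOrthogonalProjection]

theorem real_inner_starProjection_right_self (v : F) :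
    ⟪v, K.starProjection v⟫ = ‖K.starProjection v‖ ^ 2 := by
  have h := K.starProjection_inner_eq_zero v _ (K.starProjection_apply_mem v)
  rw [inner_sub_left, real_inner_self_eq_norm_sq] at h
  linarith

theorem exists_norm_eq_one_sub_dist_le_abs_inner {v : F} {ε : ℝ} (hε : 0 < ε)
    (hfar : ∀ ζ ∈ Kᗮ, ε ≤ dist v ζ) :
    ∃ Y ∈ K, ‖Y‖ = 1 ∧ ∀ ξ, ε - dist ξ v ≤ |⟪ξ, Y⟫| := by
  have hvP := K.real_inner_starProjection_right_self v
  set P := K.starProjection v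
  have hP : ε ≤ ‖P‖ := by
    simpa [dist_eq_norm] using hfar _ (K.sub_starProjection_mem_orthogonal v)
  have hP0 : P ≠ 0 := norm_pos_iff.mp (hε.trans_le hP)
  set Y := NormedSpace.normalize P
  have hY : ‖Y‖ = 1 := NormedSpace.norm_normalize hP0
  have hvY : ⟪v, Y⟫ = ‖P‖ := by
    rw [show Y = ‖P‖⁻¹ • P from rfl, real_inner_smul_right, hvP]
    field_simp
  refine ⟨Y, K.smul_mem _ (K.starProjection_apply_mem v), hY, fun ξ => ?_⟩
  calc ε - dist ξ v ≤ ⟪v, Y⟫ - ‖ξ - v‖ := by rw [hvY, dist_eq_norm]; linarith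
    _ ≤ ⟪ξ, Y⟫ := real_inner_sub_norm_sub_le_of_norm_eq_one hY ξ v
    _ ≤ |⟪ξ, Y⟫| := le_abs_self _

end Submodule

end

theorem stmt_7_general {g : Type*} [NormedAddCommGroup g] [InnerProductSpace ℝ g]
    [FiniteDimensional ℝ g] {X : Type*}
    (V : X → Submodule ℝ g)
    (η₀ : g) (hη : η₀ ∉ closure (⋃ x, ((V x)ᗮ : Set g))) :
    ∃ Ω : Set g, IsOpen Ω ∧ η₀ ∈ Ω ∧
      ∃ c > 0, ∀ x, ∃ Y ∈ V x, ‖Y‖ = 1 ∧ ∀ ξ ∈ Ω, c ≤ |⟪ξ, Y⟫| := by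
  obtain ⟨ε, hε, hfar⟩ : ∃ ε > 0, ∀ ζ ∈ ⋃ x, ((V x)ᗮ : Set g), ε ≤ dist η₀ ζ := by
    simpa [Metric.mem_closure_iff] using hη
  refine ⟨ball η₀ (ε / 2), isOpen_ball, mem_ball_self (half_pos hε), ε / 2, half_pos hε,
    fun x => ?_⟩
  obtain ⟨Y, hYV, hY, hlow⟩ := (V x).exists_norm_eq_one_sub_dist_le_abs_inner hε
    fun ζ hζ => hfar ζ (Set.mem_iUnion_of_mem x hζ)
  exact ⟨Y, hYV, hY, fun ξ hξ => by linarith [hlow ξ, mem_ball.mp hξ]⟩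

/-- Let `g` be a finite-dimensional real inner product space and
`(V x)_{x ∈ X}` a family of `k`-dimensional subspaces.  If `η₀` is not in the closure of
`⋃ x, (V x)ᗮ`, then there is an open neighborhood `Ω` of `η₀` such that
`C_Ω = inf_x sup_{Y ∈ V x, ‖Y‖ = 1} inf_{ξ ∈ Ω} |⟨ξ, Y⟩| > 0`; i.e. there is `c > 0`
such that for every `x` there is a unit vector `Y ∈ V x` with `|⟨ξ, Y⟩| ≥ c` for all
`ξ ∈ Ω`. -/
theorem stmt_7 {g : Type*} [NormedAddCommGroup g] [InnerProductSpace ℝ g]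
    [FiniteDimensional ℝ g] {X : Type*} (k : ℕ) (hk : 0 < k)
    (V : X → Submodule ℝ g)
    (hdim : ∀ x, Module.finrank ℝ (V x) = k)
    (η₀ : g) (hη : η₀ ∉ closure (⋃ x, ((V x)ᗮ : Set g))) :
    ∃ Ω : Set g, IsOpen Ω ∧ η₀ ∈ Ω ∧
      ∃ c > 0, ∀ x, ∃ Y ∈ V x, ‖Y‖ = 1 ∧ ∀ ξ ∈ Ω, c ≤ |⟪ξ, Y⟫| :=
  stmt_7_general V η₀ hη
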